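/- Let M be compact metric, μ a Borel probability measure, and k a symmetric, nonnegative, uniformly Lipschitz kernel with k(p,p) = 0 for all p. Let g_n be minimizers of the free energy E_{b_n} with b_n → ∞. Then (2/b_n)·E_{b_n}[g_n] → 0 as n → ∞. -/

import Mathlib

/-!
Since `x log x ≥ x - 1`, the entropy of a probability density is nonnegative, and so is the
interaction term; hence `E_b[g_n] ≥ 0`. For the upper bound, compare `g_n` with the uniform
density `f` on a ball `B` of radius `r` and positive measure: by Lipschitz continuity and
`k(p,p) = 0`, `k ≤ 2|L|r` on `B × B`, so
`(2/b) E_b[g_n] ≤ (2/b) E_b[f] ≤ -(2/b) log μ(B) + 2|L|r`, whose limit superior is at most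
`2|L|r`, with `r` arbitrary.
-/

open MeasureTheory Real Filter

/-- The free energy `E_b[f] = ∫ f log f dμ + (b/2)∫∫ k(p,q) f(p) f(q) dμ(p) dμ(q)`. -/
noncomputable def freeEnergy {M : Type*} [MeasurableSpace M] (μ : Measure M)
    (k : M → M → ℝ) (b : ℝ) (f : M → ℝ) : ℝ :=
  (∫ x, f x * Real.log (f x) ∂μ) + b / 2 * ∫ x, ∫ y, k x y * f x * f y ∂μ ∂μ

section FreeEnergy

variable {M : Type*} [MeasurableSpace M] {μ : Measure M} {k : M → M → ℝ} {f : M → ℝ}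

theorem integral_mul_log_nonneg_of_integral_eq_one [IsProbabilityMeasure μ]
    (hf0 : ∀ x, 0 ≤ f x) (hfi : Integrable f μ) (hf1 : ∫ x, f x ∂μ = 1)
    (hflog : Integrable (fun x => f x * log (f x)) μ) :
    0 ≤ ∫ x, f x * log (f x) ∂μ := by
  have hmono := integral_mono (f := fun x => f x - 1) (hfi.sub (integrable_const 1)) hflog
    fun x => self_sub_one_le_mul_log (hf0 x)
  rwa [integral_sub hfi (integrable_const 1), hf1, integral_const, probReal_univ, one_smul,
    sub_self] at hmono

theorem interaction_nonneg (hk0 : ∀ x y, 0 ≤ k x y) (hf0 : ∀ x, 0 ≤ f x) :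
    0 ≤ ∫ x, ∫ y, k x y * f x * f y ∂μ ∂μ :=
  integral_nonneg fun x => integral_nonneg fun y =>
    mul_nonneg (mul_nonneg (hk0 x y) (hf0 x)) (hf0 y)

theorem freeEnergy_nonneg [IsProbabilityMeasure μ] {b : ℝ} (hb : 0 ≤ b)
    (hk0 : ∀ x y, 0 ≤ k x y) (hf0 : ∀ x, 0 ≤ f x) (hfi : Integrable f μ)
    (hf1 : ∫ x, f x ∂μ = 1) (hflog : Integrable (fun x => f x * log (f x)) μ) :
    0 ≤ freeEnergy μ k b f :=
  add_nonneg (integral_mul_log_nonneg_of_integral_eq_one hf0 hfi hf1 hflog)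
    (mul_nonneg (by positivity) (interaction_nonneg hk0 hf0))

theorem interaction_le_of_le_on {s : Set M} {K : ℝ} (hk0 : ∀ x y, 0 ≤ k x y)
    (hkK : ∀ x ∈ s, ∀ y ∈ s, k x y ≤ K) (hf0 : ∀ x, 0 ≤ f x)
    (hfs : ∀ x ∉ s, f x = 0) (hfi : Integrable f μ) (hf1 : ∫ x, f x ∂μ = 1) :
    ∫ x, ∫ y, k x y * f x * f y ∂μ ∂μ ≤ K := by
  have hpoint : ∀ x y, k x y * f x * f y ≤ K * f x * f y := by
    intro x y
    by_cases hx : x ∈ s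
    · by_cases hy : y ∈ s
      · have := hf0 x; have := hf0 y; gcongr; exact hkK x hx y hy
      · simp [hfs y hy]
    · simp [hfs x hx]
  have hinner : ∀ x, ∫ y, k x y * f x * f y ∂μ ≤ K * f x := fun x =>
    calc ∫ y, k x y * f x * f y ∂μ ≤ ∫ y, K * f x * f y ∂μ :=
          integral_mono_of_nonneg (.of_forall fun y =>
            mul_nonneg (mul_nonneg (hk0 x y) (hf0 x)) (hf0 y))
            (hfi.const_mul _) (.of_forall (hpoint x))
      _ = K * f x := by rw [integral_const_mul, hf1, mul_one]
  calc ∫ x, ∫ y, k x y * f x * f y ∂μ ∂μ ≤ ∫ x, K * f x ∂μ :=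
        integral_mono_of_nonneg (.of_forall fun x => integral_nonneg fun y =>
          mul_nonneg (mul_nonneg (hk0 x y) (hf0 x)) (hf0 y))
          (hfi.const_mul _) (.of_forall hinner)
    _ = K := by rw [integral_const_mul, hf1, mul_one]

noncomputable def uniformDensity (μ : Measure M) (s : Set M) : M → ℝ :=
  s.indicator fun _ => (μ.real s)⁻¹

section UniformDensity

variable {s : Set M}

theorem uniformDensity_nonneg (x : M) : 0 ≤ uniformDensity μ s x :=
  Set.indicator_nonneg (fun _ _ => inv_nonneg.2 measureReal_nonneg) x

theorem uniformDensity_of_notMem {x : M} (hx : x ∉ s) : uniformDensity μ s x = 0 :=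
  Set.indicator_of_notMem hx _

theorem measurable_uniformDensity (hs : MeasurableSet s) : Measurable (uniformDensity μ s) :=
  measurable_const.indicator hs

theorem integrable_uniformDensity (hs : MeasurableSet s) (hμs : μ s ≠ ⊤) :
    Integrable (uniformDensity μ s) μ :=
  (integrable_indicator_iff hs).2 (integrableOn_const hμs)

theorem integral_uniformDensity (hs : MeasurableSet s) (hμs0 : μ s ≠ 0) (hμs : μ s ≠ ⊤) :
    ∫ x, uniformDensity μ s x ∂μ = 1 := by
  rw [uniformDensity, integral_indicator_const _ hs, smul_eq_mul,
    mul_inv_cancel₀ (measureReal_ne_zero_iff hμs |>.2 hμs0)]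

theorem uniformDensity_mul_log :
    (fun x => uniformDensity μ s x * log (uniformDensity μ s x)) =
      s.indicator fun _ => (μ.real s)⁻¹ * log (μ.real s)⁻¹ := by
  funext x
  by_cases hx : x ∈ s <;> simp [uniformDensity, hx]

theorem integral_uniformDensity_mul_log (hs : MeasurableSet s) (hμs0 : μ s ≠ 0)
    (hμs : μ s ≠ ⊤) :
    ∫ x, uniformDensity μ s x * log (uniformDensity μ s x) ∂μ = -log (μ.real s) := by
  rw [uniformDensity_mul_log, integral_indicator_const _ hs, smul_eq_mul, ← mul_assoc,
    mul_inv_cancel₀ (measureReal_ne_zero_iff hμs |>.2 hμs0), one_mul, log_inv]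

theorem integrable_uniformDensity_mul_log (hs : MeasurableSet s) (hμs : μ s ≠ ⊤) :
    Integrable (fun x => uniformDensity μ s x * log (uniformDensity μ s x)) μ := by
  rw [uniformDensity_mul_log]
  exact (integrable_indicator_iff hs).2 (integrableOn_const hμs)

theorem freeEnergy_uniformDensity_le {b K : ℝ} (hb : 0 ≤ b) (hk0 : ∀ x y, 0 ≤ k x y)
    (hkK : ∀ x ∈ s, ∀ y ∈ s, k x y ≤ K) (hs : MeasurableSet s) (hμs0 : μ s ≠ 0)
    (hμs : μ s ≠ ⊤) :
    freeEnergy μ k b (uniformDensity μ s) ≤ -log (μ.real s) + b / 2 * K := by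
  rw [freeEnergy, integral_uniformDensity_mul_log hs hμs0 hμs]
  gcongr
  exact interaction_le_of_le_on hk0 hkK uniformDensity_nonneg
    (fun _ => uniformDensity_of_notMem)
    (integrable_uniformDensity hs hμs) (integral_uniformDensity hs hμs0 hμs)

end UniformDensity

end FreeEnergy

theorem kernel_le_of_mem_ball {M : Type*} [PseudoMetricSpace M] {k : M → M → ℝ} {L r : ℝ}
    (hsym : ∀ p q, k p q = k q p) (hkL : ∀ p q s, |k p s - k q s| ≤ L * dist p q)
    (hdiag : ∀ p, k p p = 0) {p x y : M} (hx : x ∈ Metric.ball p r)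
    (hy : y ∈ Metric.ball p r) :
    k x y ≤ 2 * |L| * r := by
  have hxp : k x y ≤ k p y + L * dist x p := by linarith [(abs_le.1 (hkL x p y)).2]
  have hyp : k y p ≤ L * dist y p := by linarith [(abs_le.1 (hkL y p p)).2, hdiag p]
  rw [Metric.mem_ball] at hx hy
  calc k x y ≤ L * (dist x p + dist y p) := by linarith [hsym p y]
    _ ≤ |L| * (dist x p + dist y p) := by gcongr; exact le_abs_self L
    _ ≤ |L| * (r + r) := by gcongr
    _ = 2 * |L| * r := by ring

theorem exists_measure_ball_pos {M : Type*} [PseudoMetricSpace M] [HereditarilyLindelofSpace M]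
    [MeasurableSpace M] (μ : Measure M) [NeZero μ] {r : ℝ} (hr : 0 < r) :
    ∃ p, 0 < μ (Metric.ball p r) := by
  obtain ⟨p, hp⟩ := Measure.nonempty_support (NeZero.ne μ)
  exact ⟨p, (Measure.mem_support_iff_forall p).1 hp _ (Metric.ball_mem_nhds p hr)⟩

theorem exists_measure_pos_kernel_le {M : Type*} [PseudoMetricSpace M]
    [HereditarilyLindelofSpace M] [MeasurableSpace M] [OpensMeasurableSpace M] (μ : Measure M)
    [NeZero μ] {k : M → M → ℝ} {L ε : ℝ} (hsym : ∀ p q, k p q = k q p)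
    (hkL : ∀ p q s, |k p s - k q s| ≤ L * dist p q) (hdiag : ∀ p, k p p = 0) (hε : 0 < ε) :
    ∃ s : Set M, MeasurableSet s ∧ 0 < μ s ∧ ∀ x ∈ s, ∀ y ∈ s, k x y ≤ ε := by
  have hr : 0 < ε / (2 * (|L| + 1)) := by positivity
  have hLr : 2 * |L| * (ε / (2 * (|L| + 1))) ≤ ε := by
    rw [← mul_div_assoc, div_le_iff₀ (by positivity)]
    nlinarith [abs_nonneg L]
  obtain ⟨p, hp⟩ := exists_measure_ball_pos μ hr
  exact ⟨_, measurableSet_ball, hp, fun x hx y hy =>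
    (kernel_le_of_mem_ball hsym hkL hdiag hx hy).trans hLr⟩

theorem tendsto_zero_of_nonneg_of_le_div_add {ι : Type*} {l : Filter ι} {u b : ι → ℝ}
    (hb : Tendsto b l atTop) (hu0 : ∀ᶠ i in l, 0 ≤ u i)
    (hu : ∀ ε > 0, ∃ C, ∀ᶠ i in l, u i ≤ C / b i + ε) : Tendsto u l (nhds 0) := by
  refine tendsto_order.2 ⟨fun a ha => hu0.mono fun i hi => ha.trans_le hi, fun a ha => ?_⟩
  obtain ⟨C, hC⟩ := hu (a / 2) (half_pos ha)
  have hCb : ∀ᶠ i in l, C / b i < a / 2 :=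
    (hb.const_div_atTop C).eventually (gt_mem_nhds (half_pos ha))
  filter_upwards [hC, hCb] with i hi hi'
  linarith

theorem scaled_free_energy_tendsto_zero_general {M : Type*} [MetricSpace M] [CompactSpace M]
    [MeasurableSpace M] [BorelSpace M] (μ : Measure M) [IsProbabilityMeasure μ]
    (k : M → M → ℝ) (L : ℝ)
    (hsym : ∀ p q, k p q = k q p) (hk0 : ∀ p q, 0 ≤ k p q)
    (hkL : ∀ p q s, |k p s - k q s| ≤ L * dist p q)
    (hdiag : ∀ p, k p p = 0)
    (b : ℕ → ℝ) (hb : Tendsto b atTop atTop)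
    (g : ℕ → M → ℝ) (hg0 : ∀ n x, 0 ≤ g n x)
    (hgi : ∀ n, Integrable (g n) μ) (hg1 : ∀ n, ∫ x, g n x ∂μ = 1)
    (hgent : ∀ n, Integrable (fun x => g n x * Real.log (g n x)) μ)
    (hmin : ∀ n, ∀ f : M → ℝ, Measurable f → (∀ x, 0 ≤ f x) → Integrable f μ →
      (∫ x, f x ∂μ) = 1 → Integrable (fun x => f x * Real.log (f x)) μ →
      freeEnergy μ k (b n) (g n) ≤ freeEnergy μ k (b n) f) :
    Tendsto (fun n => 2 / b n * freeEnergy μ k (b n) (g n)) atTop (nhds 0) := by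
  have hbpos := hb.eventually_gt_atTop 0
  refine tendsto_zero_of_nonneg_of_le_div_add hb ?_ fun ε hε => ?_
  · filter_upwards [hbpos] with n hn
    exact mul_nonneg (by positivity)
      (freeEnergy_nonneg hn.le hk0 (hg0 n) (hgi n) (hg1 n) (hgent n))
  obtain ⟨B, hB, hBpos, hkB⟩ := exists_measure_pos_kernel_le μ hsym hkL hdiag hε
  refine ⟨-2 * log (μ.real B), ?_⟩
  filter_upwards [hbpos] with n hn
  calc 2 / b n * freeEnergy μ k (b n) (g n)
      ≤ 2 / b n * freeEnergy μ k (b n) (uniformDensity μ B) := by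
        gcongr
        exact hmin n _ (measurable_uniformDensity hB) uniformDensity_nonneg
          (integrable_uniformDensity hB (measure_ne_top μ B))
          (integral_uniformDensity hB hBpos.ne' (measure_ne_top μ B))
          (integrable_uniformDensity_mul_log hB (measure_ne_top μ B))
    _ ≤ 2 / b n * (-log (μ.real B) + b n / 2 * ε) := by
        gcongr
        exact freeEnergy_uniformDensity_le hn.le hk0 hkB hB hBpos.ne' (measure_ne_top μ B)
    _ = -2 * log (μ.real B) / b n + ε := by
        field_simp

theorem scaled_free_energy_tendsto_zero {M : Type*} [MetricSpace M] [CompactSpace M]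
    [MeasurableSpace M] [BorelSpace M] (μ : Measure M) [IsProbabilityMeasure μ]
    (k : M → M → ℝ) (L : ℝ)
    (hsym : ∀ p q, k p q = k q p) (hk0 : ∀ p q, 0 ≤ k p q)
    (hkL : ∀ p q s, |k p s - k q s| ≤ L * dist p q)
    (hdiag : ∀ p, k p p = 0)
    (b : ℕ → ℝ) (hbpos : ∀ n, 0 < b n) (hb : Tendsto b atTop atTop)
    (g : ℕ → M → ℝ) (hgm : ∀ n, Measurable (g n)) (hg0 : ∀ n x, 0 ≤ g n x)
    (hgi : ∀ n, Integrable (g n) μ) (hg1 : ∀ n, ∫ x, g n x ∂μ = 1)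
    (hgent : ∀ n, Integrable (fun x => g n x * Real.log (g n x)) μ)
    (hmin : ∀ n, ∀ f : M → ℝ, Measurable f → (∀ x, 0 ≤ f x) → Integrable f μ →
      (∫ x, f x ∂μ) = 1 → Integrable (fun x => f x * Real.log (f x)) μ →
      freeEnergy μ k (b n) (g n) ≤ freeEnergy μ k (b n) f) :
    Tendsto (fun n => 2 / b n * freeEnergy μ k (b n) (g n)) atTop (nhds 0) :=
  scaled_free_energy_tendsto_zero_general μ k L hsym hk0 hkL hdiag b hb g hg0 hgi hg1 hgent hmin
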